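/- Let Z, A, M, Y be finitely-valued with strictly positive joint pmf p that is the margin of the structural model p(z)·p(u)·p(a | z, u)·p(m | a, z)·p(y | m, u). Then for every a, Σ_{z,m,y} p(z)·p(m | a, z)·[Σ_{a'} p(a' | z)·p(y | z, a', m)]·y equals Σ_{z,m,y} p(z)·p(m | a, z)·q_Y(y | m)·y where q_Y(y | m) = Σ_u p(u)·p(y | m, u); and if additionally p(m | a, z) = p(m | a) for all z (no Z→M edge), this quantity reduces to Pearl's front-door formula Σ_m p(m | a)·Σ_{a'} p(a')·Σ_y p(y | a', m)·y. -/

import Mathlib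

/-!
In the structural model the observed joint factors as `p(z) · p(m | a, z) · T(z, a, m, y)`
with `T(z, a, m, y) = Σ_u p(u) p(a | z, u) p(y | m, u)`. Summing out `y` shows that the
observed `p(a | z)` is `Σ_u p(u) p(a | z, u)`, hence `p(a | z) · p(y | z, a, m) = T(z, a, m, y)`,
and summing `T` over `a` gives `q_Y(y | m)` because `p(· | z, u)` is a probability vector.
Without the `Z → M` edge the factor `p(m | a)` leaves every sum over `z`, so the observed
`p(m | a)` is the structural one and `p(a) · p(y | a, m) = Σ_z p(z) T(z, a, m, y)`; summing
over `a` again gives `q_Y(y | m)`, so both formulas equal `Σ_m p(m | a) Σ_y q_Y(y | m) f(y)`.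
-/

open Finset

namespace FrontDoor

variable {Z U A M Y : Type*}

/- `propensity pu pa z a` is `p(a | z)`, `treatmentOutcome pu pa py z a m y` is `T(z, a, m, y)` and
`outcomeKernel pu py y m` is `q_Y(y | m)`; the `prob…` definitions below are the observed
conditionals and margins of a joint `p z a m y`. -/

def structuralJoint [Fintype U] (pz : Z → ℝ) (pu : U → ℝ) (pa : A → Z → U → ℝ)
    (pm : M → A → Z → ℝ) (py : Y → M → U → ℝ) (z : Z) (a : A) (m : M)
    (y : Y) : ℝ :=
  ∑ u, pz z * pu u * pa a z u * pm m a z * py y m u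

def propensity [Fintype U] (pu : U → ℝ) (pa : A → Z → U → ℝ) (z : Z) (a : A) : ℝ :=
  ∑ u, pu u * pa a z u

def treatmentOutcome [Fintype U] (pu : U → ℝ) (pa : A → Z → U → ℝ)
    (py : Y → M → U → ℝ) (z : Z) (a : A) (m : M) (y : Y) : ℝ :=
  ∑ u, pu u * pa a z u * py y m u

def outcomeKernel [Fintype U] (pu : U → ℝ) (py : Y → M → U → ℝ) (y : Y) (m : M) : ℝ :=
  ∑ u, pu u * py y m u

noncomputable section Observed

variable (p : Z → A → M → Y → ℝ)

def probAGivenZ [Fintype A] [Fintype M] [Fintype Y] (a : A) (z : Z) : ℝ :=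
  (∑ m, ∑ y, p z a m y) / ∑ a', ∑ m, ∑ y, p z a' m y

def probYGivenZAM [Fintype Y] (y : Y) (z : Z) (a : A) (m : M) : ℝ :=
  p z a m y / ∑ y', p z a m y'

def probMGivenA [Fintype Z] [Fintype M] [Fintype Y] (m : M) (a : A) : ℝ :=
  (∑ z, ∑ y, p z a m y) / ∑ z, ∑ m', ∑ y, p z a m' y

def probA [Fintype Z] [Fintype M] [Fintype Y] (a : A) : ℝ :=
  ∑ z, ∑ m, ∑ y, p z a m y

def probYGivenAM [Fintype Z] [Fintype Y] (y : Y) (a : A) (m : M) : ℝ :=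
  (∑ z, p z a m y) / ∑ z, ∑ y', p z a m y'

end Observed

section Structural

variable {pz : Z → ℝ} {pu : U → ℝ} {pa : A → Z → U → ℝ} {pm : M → A → Z → ℝ}
  {py : Y → M → U → ℝ}

theorem structuralJoint_eq [Fintype U] (z : Z) (a : A) (m : M) (y : Y) :
    structuralJoint pz pu pa pm py z a m y =
      pz z * pm m a z * treatmentOutcome pu pa py z a m y := by
  rw [structuralJoint, treatmentOutcome, mul_sum]
  exact sum_congr rfl fun u _ => by ring

theorem sum_treatmentOutcome_outcome [Fintype U] [Fintype Y] (hpyn : ∀ m u, ∑ y, py y m u = 1)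
    (z : Z) (a : A) (m : M) :
    ∑ y, treatmentOutcome pu pa py z a m y = propensity pu pa z a := by
  simp only [treatmentOutcome, propensity]
  rw [sum_comm]
  exact sum_congr rfl fun u _ => by rw [← mul_sum, hpyn, mul_one]

theorem sum_treatmentOutcome_treatment [Fintype U] [Fintype A] (hpan : ∀ z u, ∑ a, pa a z u = 1)
    (z : Z) (m : M) (y : Y) :
    ∑ a, treatmentOutcome pu pa py z a m y = outcomeKernel pu py y m := by
  simp only [treatmentOutcome, outcomeKernel]
  rw [sum_comm]
  exact sum_congr rfl fun u _ => by rw [← sum_mul, ← mul_sum, hpan, mul_one]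

theorem sum_propensity [Fintype U] [Fintype A] (hpun : ∑ u, pu u = 1)
    (hpan : ∀ z u, ∑ a, pa a z u = 1) (z : Z) :
    ∑ a, propensity pu pa z a = 1 := by
  simp only [propensity]
  rw [sum_comm]
  simp only [← mul_sum, hpan, mul_one, hpun]

theorem propensity_pos [Fintype U] [Nonempty U] (hpu : ∀ u, 0 < pu u)
    (hpa : ∀ a z u, 0 < pa a z u) (z : Z) (a : A) : 0 < propensity pu pa z a :=
  sum_pos (fun u _ => mul_pos (hpu u) (hpa a z u)) univ_nonempty

theorem sum_structuralJoint_outcome [Fintype U] [Fintype Y] (hpyn : ∀ m u, ∑ y, py y m u = 1)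
    (z : Z) (a : A) (m : M) :
    ∑ y, structuralJoint pz pu pa pm py z a m y = pz z * pm m a z * propensity pu pa z a := by
  simp only [structuralJoint_eq, ← mul_sum, sum_treatmentOutcome_outcome hpyn]

theorem sum_structuralJoint_mediator_outcome [Fintype U] [Fintype M] [Fintype Y]
    (hpmn : ∀ a z, ∑ m, pm m a z = 1) (hpyn : ∀ m u, ∑ y, py y m u = 1) (z : Z) (a : A) :
    ∑ m, ∑ y, structuralJoint pz pu pa pm py z a m y = pz z * propensity pu pa z a := by
  simp only [sum_structuralJoint_outcome hpyn]
  rw [← sum_mul, ← mul_sum, hpmn, mul_one]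

theorem probAGivenZ_structuralJoint [Fintype U] [Fintype A] [Fintype M] [Fintype Y]
    (hpz : ∀ z, 0 < pz z) (hpun : ∑ u, pu u = 1) (hpan : ∀ z u, ∑ a, pa a z u = 1)
    (hpmn : ∀ a z, ∑ m, pm m a z = 1) (hpyn : ∀ m u, ∑ y, py y m u = 1) (a : A) (z : Z) :
    probAGivenZ (structuralJoint pz pu pa pm py) a z = propensity pu pa z a := by
  simp only [probAGivenZ, sum_structuralJoint_mediator_outcome hpmn hpyn, ← mul_sum,
    sum_propensity hpun hpan, mul_one]
  exact mul_div_cancel_left₀ _ (hpz z).ne'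

theorem probYGivenZAM_structuralJoint [Fintype U] [Fintype Y] (hpz : ∀ z, 0 < pz z)
    (hpm : ∀ m a z, 0 < pm m a z) (hpyn : ∀ m u, ∑ y, py y m u = 1)
    (y : Y) (z : Z) (a : A) (m : M) :
    probYGivenZAM (structuralJoint pz pu pa pm py) y z a m =
      treatmentOutcome pu pa py z a m y / propensity pu pa z a := by
  rw [probYGivenZAM, structuralJoint_eq, sum_structuralJoint_outcome hpyn,
    mul_div_mul_left _ _ (mul_pos (hpz z) (hpm m a z)).ne']

theorem sum_probAGivenZ_mul_probYGivenZAM [Fintype U] [Fintype A] [Fintype M] [Fintype Y]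
    [Nonempty U] (hpz : ∀ z, 0 < pz z) (hpu : ∀ u, 0 < pu u) (hpa : ∀ a z u, 0 < pa a z u)
    (hpm : ∀ m a z, 0 < pm m a z) (hpun : ∑ u, pu u = 1) (hpan : ∀ z u, ∑ a, pa a z u = 1)
    (hpmn : ∀ a z, ∑ m, pm m a z = 1) (hpyn : ∀ m u, ∑ y, py y m u = 1)
    (z : Z) (m : M) (y : Y) :
    ∑ a, probAGivenZ (structuralJoint pz pu pa pm py) a z *
        probYGivenZAM (structuralJoint pz pu pa pm py) y z a m =
      outcomeKernel pu py y m := by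
  rw [← sum_treatmentOutcome_treatment hpan z m y]
  refine sum_congr rfl fun a _ => ?_
  rw [probAGivenZ_structuralJoint hpz hpun hpan hpmn hpyn,
    probYGivenZAM_structuralJoint hpz hpm hpyn,
    mul_div_cancel₀ _ (propensity_pos hpu hpa z a).ne']

theorem probA_structuralJoint [Fintype Z] [Fintype U] [Fintype M] [Fintype Y]
    (hpmn : ∀ a z, ∑ m, pm m a z = 1) (hpyn : ∀ m u, ∑ y, py y m u = 1) (a : A) :
    probA (structuralJoint pz pu pa pm py) a = ∑ z, pz z * propensity pu pa z a :=
  sum_congr rfl fun z _ => sum_structuralJoint_mediator_outcome hpmn hpyn z a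

end Structural

section NoAnchorMediatorEdge

variable {pz : Z → ℝ} {pu : U → ℝ} {pa : A → Z → U → ℝ} {pm : M → A → ℝ}
  {py : Y → M → U → ℝ}

local notation "J" => structuralJoint pz pu pa (fun m a _ => pm m a) py

theorem probMGivenA_structuralJoint [Fintype Z] [Fintype U] [Fintype M] [Fintype Y]
    [Nonempty Z] [Nonempty U] (hpz : ∀ z, 0 < pz z) (hpu : ∀ u, 0 < pu u)
    (hpa : ∀ a z u, 0 < pa a z u) (hpmn : ∀ a, ∑ m, pm m a = 1)
    (hpyn : ∀ m u, ∑ y, py y m u = 1) (m : M) (a : A) :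
    probMGivenA J m a = pm m a := by
  have hmarg : 0 < ∑ z, pz z * propensity pu pa z a :=
    sum_pos (fun z _ => mul_pos (hpz z) (propensity_pos hpu hpa z a)) univ_nonempty
  simp only [probMGivenA, sum_structuralJoint_mediator_outcome (fun a _ => hpmn a) hpyn]
  simp only [sum_structuralJoint_outcome hpyn, mul_right_comm (pz _) (pm m a), ← sum_mul]
  exact mul_div_cancel_left₀ _ hmarg.ne'

theorem probYGivenAM_structuralJoint [Fintype Z] [Fintype U] [Fintype Y]
    (hpm : ∀ m a, 0 < pm m a) (hpyn : ∀ m u, ∑ y, py y m u = 1) (y : Y) (a : A) (m : M) :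
    probYGivenAM J y a m =
      (∑ z, pz z * treatmentOutcome pu pa py z a m y) / ∑ z, pz z * propensity pu pa z a := by
  simp only [probYGivenAM, sum_structuralJoint_outcome hpyn]
  simp only [structuralJoint_eq, mul_right_comm (pz _) (pm m a), ← sum_mul]
  exact mul_div_mul_right _ _ (hpm m a).ne'

theorem sum_probA_mul_probYGivenAM [Fintype Z] [Fintype U] [Fintype A] [Fintype M] [Fintype Y]
    [Nonempty Z] [Nonempty U] (hpz : ∀ z, 0 < pz z) (hpu : ∀ u, 0 < pu u)
    (hpa : ∀ a z u, 0 < pa a z u) (hpm : ∀ m a, 0 < pm m a) (hpzn : ∑ z, pz z = 1)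
    (hpan : ∀ z u, ∑ a, pa a z u = 1) (hpmn : ∀ a, ∑ m, pm m a = 1)
    (hpyn : ∀ m u, ∑ y, py y m u = 1) (y : Y) (m : M) :
    ∑ a, probA J a * probYGivenAM J y a m = outcomeKernel pu py y m := by
  have hmarg (a : A) : 0 < ∑ z, pz z * propensity pu pa z a :=
    sum_pos (fun z _ => mul_pos (hpz z) (propensity_pos hpu hpa z a)) univ_nonempty
  calc ∑ a, probA J a * probYGivenAM J y a m
      = ∑ a, ∑ z, pz z * treatmentOutcome pu pa py z a m y := sum_congr rfl fun a _ => by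
        rw [probA_structuralJoint (fun a _ => hpmn a) hpyn,
          probYGivenAM_structuralJoint hpm hpyn, mul_div_cancel₀ _ (hmarg a).ne']
    _ = outcomeKernel pu py y m := by
      rw [sum_comm]
      simp only [← mul_sum, sum_treatmentOutcome_treatment hpan, ← sum_mul, hpzn, one_mul]

theorem frontDoor_eq [Fintype Z] [Fintype U] [Fintype A] [Fintype M] [Fintype Y]
    [Nonempty Z] [Nonempty U] (f : Y → ℝ) (hpz : ∀ z, 0 < pz z) (hpu : ∀ u, 0 < pu u)
    (hpa : ∀ a z u, 0 < pa a z u) (hpm : ∀ m a, 0 < pm m a) (hpzn : ∑ z, pz z = 1)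
    (hpan : ∀ z u, ∑ a, pa a z u = 1) (hpmn : ∀ a, ∑ m, pm m a = 1)
    (hpyn : ∀ m u, ∑ y, py y m u = 1) (a : A) :
    ∑ m, probMGivenA J m a * ∑ a', probA J a' * ∑ y, probYGivenAM J y a' m * f y =
      ∑ m, pm m a * ∑ y, outcomeKernel pu py y m * f y := by
  refine sum_congr rfl fun m _ => ?_
  rw [probMGivenA_structuralJoint hpz hpu hpa hpmn hpyn]
  congr 1
  simp only [mul_sum, ← mul_assoc]
  rw [sum_comm]
  simp only [← sum_mul, sum_probA_mul_probYGivenAM hpz hpu hpa hpm hpzn hpan hpmn hpyn]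

end NoAnchorMediatorEdge

end FrontDoor

open FrontDoor in
theorem stmt_18_general
    {Z U A M Y : Type*} [Fintype Z] [Fintype U] [Fintype A] [Fintype M] [Fintype Y]
    (f : Y → ℝ)
    (pz : Z → ℝ) (pu : U → ℝ) (pa : A → Z → U → ℝ)
    (pm : M → A → Z → ℝ) (py : Y → M → U → ℝ)
    (hpz : ∀ z, 0 < pz z) (hpu : ∀ u, 0 < pu u)
    (hpa : ∀ a z u, 0 < pa a z u) (hpm : ∀ m a z, 0 < pm m a z)
    (hpzn : ∑ z, pz z = 1) (hpun : ∑ u, pu u = 1)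
    (hpan : ∀ z u, ∑ a, pa a z u = 1) (hpmn : ∀ a z, ∑ m, pm m a z = 1)
    (hpyn : ∀ m u, ∑ y, py y m u = 1)
    (p : Z → A → M → Y → ℝ)
    (hp : ∀ z a m y, p z a m y = ∑ u, pz z * pu u * pa a z u * pm m a z * py y m u)
    (pAo : A → Z → ℝ)
    (hpAo : ∀ a z, pAo a z = (∑ m, ∑ y, p z a m y) / (∑ a', ∑ m, ∑ y, p z a' m y))
    (pYo : Y → Z → A → M → ℝ)
    (hpYo : ∀ y z a m, pYo y z a m = p z a m y / (∑ y', p z a m y'))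
    (qYm : Y → M → ℝ)
    (hqYm : ∀ y m, qYm y m = ∑ u, pu u * py y m u)
    -- observed quantities for the classical front-door formula
    (pMA : M → A → ℝ)
    (hpMA : ∀ m a, pMA m a =
      (∑ z, ∑ y, p z a m y) / (∑ z, ∑ m', ∑ y, p z a m' y))
    (pAmarg : A → ℝ)
    (hpAmarg : ∀ a, pAmarg a = ∑ z, ∑ m, ∑ y, p z a m y)
    (pYAM : Y → A → M → ℝ)
    (hpYAM : ∀ y a m, pYAM y a m =
      (∑ z, p z a m y) / (∑ z, ∑ y', p z a m y')) :
    ∀ a : A,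
      ((∑ z, ∑ m, ∑ y, pz z * pm m a z * (∑ a', pAo a' z * pYo y z a' m) * f y) =
        ∑ z, ∑ m, ∑ y, pz z * pm m a z * qYm y m * f y) ∧
      ((∀ m a' z z', pm m a' z = pm m a' z') →
        (∑ z, ∑ m, ∑ y, pz z * pm m a z * (∑ a', pAo a' z * pYo y z a' m) * f y) =
        ∑ m, pMA m a * (∑ a', pAmarg a' * (∑ y, pYAM y a' m * f y))) := by
  obtain rfl : p = structuralJoint pz pu pa pm py := by ext z a m y; exact hp z a m y
  obtain rfl : pAo = probAGivenZ _ := by ext a z; exact hpAo a z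
  obtain rfl : pYo = probYGivenZAM _ := by ext y z a m; exact hpYo y z a m
  obtain rfl : qYm = outcomeKernel pu py := by ext y m; exact hqYm y m
  obtain rfl : pMA = probMGivenA _ := by ext m a; exact hpMA m a
  obtain rfl : pAmarg = probA _ := by ext a; exact hpAmarg a
  obtain rfl : pYAM = probYGivenAM _ := by ext y a m; exact hpYAM y a m
  have : Nonempty U := (nonempty_of_sum_ne_zero (hpun ▸ one_ne_zero)).to_type
  have : Nonempty Z := (nonempty_of_sum_ne_zero (hpzn ▸ one_ne_zero)).to_type
  intro a
  have generalized : ∑ z, ∑ m, ∑ y, pz z * pm m a z *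
        (∑ a', probAGivenZ (structuralJoint pz pu pa pm py) a' z *
          probYGivenZAM (structuralJoint pz pu pa pm py) y z a' m) * f y =
      ∑ z, ∑ m, ∑ y, pz z * pm m a z * outcomeKernel pu py y m * f y := by
    simp only [sum_probAGivenZ_mul_probYGivenZAM hpz hpu hpa hpm hpun hpan hpmn hpyn]
  refine ⟨generalized, fun hM => ?_⟩
  have z₀ : Z := Classical.arbitrary Z
  have hpm_const : pm = fun m a _ => pm m a z₀ := by ext m a z; exact hM m a z z₀
  rw [generalized, hpm_const, frontDoor_eq f hpz hpu hpa (fun m a => hpm m a z₀) hpzn hpan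
    (fun a => hpmn a z₀) hpyn a]
  simp only [mul_assoc, ← mul_sum, ← sum_mul, hpzn, one_mul]

/-- In the structural front-door model with anchor `Z` and hidden `U`, (i)
the generalized front-door functional equals the same expression with the `z`-free kernel
`q_Y(y | m) = ∑ u, p(u)·p(y | m, u)`; and (ii) if additionally `p(m | a, z)` does not
depend on `z` (no `Z → M` edge), it reduces to Pearl's classical front-door formula. -/
theorem stmt_18
    {Z U A M Y : Type*} [Fintype Z] [Fintype U] [Fintype A] [Fintype M] [Fintype Y]
    (f : Y → ℝ)
    (pz : Z → ℝ) (pu : U → ℝ) (pa : A → Z → U → ℝ)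
    (pm : M → A → Z → ℝ) (py : Y → M → U → ℝ)
    (hpz : ∀ z, 0 < pz z) (hpu : ∀ u, 0 < pu u)
    (hpa : ∀ a z u, 0 < pa a z u) (hpm : ∀ m a z, 0 < pm m a z)
    (hpy : ∀ y m u, 0 < py y m u)
    (hpzn : ∑ z, pz z = 1) (hpun : ∑ u, pu u = 1)
    (hpan : ∀ z u, ∑ a, pa a z u = 1) (hpmn : ∀ a z, ∑ m, pm m a z = 1)
    (hpyn : ∀ m u, ∑ y, py y m u = 1)
    (p : Z → A → M → Y → ℝ)
    (hp : ∀ z a m y, p z a m y = ∑ u, pz z * pu u * pa a z u * pm m a z * py y m u)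
    (pAo : A → Z → ℝ)
    (hpAo : ∀ a z, pAo a z = (∑ m, ∑ y, p z a m y) / (∑ a', ∑ m, ∑ y, p z a' m y))
    (pYo : Y → Z → A → M → ℝ)
    (hpYo : ∀ y z a m, pYo y z a m = p z a m y / (∑ y', p z a m y'))
    (qYm : Y → M → ℝ)
    (hqYm : ∀ y m, qYm y m = ∑ u, pu u * py y m u)
    -- observed quantities for the classical front-door formula
    (pMA : M → A → ℝ)
    (hpMA : ∀ m a, pMA m a =
      (∑ z, ∑ y, p z a m y) / (∑ z, ∑ m', ∑ y, p z a m' y))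
    (pAmarg : A → ℝ)
    (hpAmarg : ∀ a, pAmarg a = ∑ z, ∑ m, ∑ y, p z a m y)
    (pYAM : Y → A → M → ℝ)
    (hpYAM : ∀ y a m, pYAM y a m =
      (∑ z, p z a m y) / (∑ z, ∑ y', p z a m y')) :
    ∀ a : A,
      ((∑ z, ∑ m, ∑ y, pz z * pm m a z * (∑ a', pAo a' z * pYo y z a' m) * f y) =
        ∑ z, ∑ m, ∑ y, pz z * pm m a z * qYm y m * f y) ∧
      ((∀ m a' z z', pm m a' z = pm m a' z') →
        (∑ z, ∑ m, ∑ y, pz z * pm m a z * (∑ a', pAo a' z * pYo y z a' m) * f y) =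
        ∑ m, pMA m a * (∑ a', pAmarg a' * (∑ y, pYAM y a' m * f y))) :=
  stmt_18_general f pz pu pa pm py hpz hpu hpa hpm hpzn hpun hpan hpmn hpyn p hp pAo hpAo pYo hpYo
    qYm hqYm pMA hpMA pAmarg hpAmarg pYAM hpYAM
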